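/- arXiv:2307.11859 — 5 statements merged into one kernel-verified Lean document; each statement's English description precedes it below -/
import Mathlib

section
/- The determinant of the (d+1)×(d+1) matrix M_k with diagonal entries k_i+1, superdiagonal entries -k_{i+1} (for i=1,...,d), entry -k_1 in position (d+1,1), and zeros elsewhere, equals ∏_{i=1}^{d+1}(k_i+1) - ∏_{i=1}^{d+1} k_i. -/
/-- The matrix `M_k`: diagonal entries `k i + 1`, cyclic superdiagonal entries
`-(k (i+1))` (including the bottom-left corner entry `-k 1`), zeros elsewhere. -/
def heawoodMatrix (d : ℕ) (k : Fin (d + 1) → ℤ) :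
    Matrix (Fin (d + 1)) (Fin (d + 1)) ℤ :=
  Matrix.of fun i j => if j = i then k i + 1 else if j = i + 1 then -k (i + 1) else 0

/-! In the Leibniz expansion of a matrix supported on the diagonal and the cyclic
superdiagonal, a permutation contributes only if it moves every index `i` to `i` or
`i - 1`. Once one index is moved down, injectivity forces its predecessor to be moved
down as well, so the only such permutations are the identity and the backward rotation.
The two surviving terms are the product of the diagonal and, with the sign of an
`(n + 2)`-cycle, the product of the cyclic superdiagonal. -/

namespace Fin

open Equiv

theorem sub_one_ne_self {n : ℕ} (i : Fin (n + 2)) : i - 1 ≠ i := by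
  simp [sub_eq_self]

theorem finRotate_inv_apply {n : ℕ} (i : Fin (n + 1)) : (finRotate (n + 1))⁻¹ i = i - 1 := by
  rw [Perm.inv_def, Equiv.symm_apply_eq, finRotate_apply, sub_add_cancel]

theorem finRotate_inv_ne_one (n : ℕ) : (finRotate (n + 2))⁻¹ ≠ 1 := fun h =>
  sub_one_ne_self (0 : Fin (n + 2)) (by rw [← finRotate_inv_apply, h]; rfl)

theorem perm_eq_one_or_eq_finRotate_inv {n : ℕ} (σ : Perm (Fin (n + 2)))
    (hσ : ∀ i, σ i = i ∨ σ i = i - 1) : σ = 1 ∨ σ = (finRotate (n + 2))⁻¹ := by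
  by_cases hfix : ∀ i, σ i = i
  · exact Or.inl (Equiv.ext hfix)
  push Not at hfix
  obtain ⟨i₀, hi₀⟩ := hfix
  have step : ∀ a, σ a = a - 1 → σ (a - 1) = a - 1 - 1 := fun a ha =>
    (hσ (a - 1)).resolve_left fun h => sub_one_ne_self a (σ.injective (h.trans ha.symm))
  have down : ∀ m : Fin (n + 2), σ (i₀ - m) = i₀ - m - 1 := by
    refine Fin.induction (by simpa using (hσ i₀).resolve_left hi₀) fun m ih => ?_
    rw [← coeSucc_eq_succ, ← sub_sub]
    exact step _ ih
  refine Or.inr (Equiv.ext fun j => ?_)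
  simpa [finRotate_inv_apply] using down (i₀ - j)

end Fin

namespace Matrix

open Equiv

theorem det_of_cyclic_bidiagonal {R : Type*} [CommRing R] {n : ℕ}
    (A : Matrix (Fin (n + 2)) (Fin (n + 2)) R) (hA : ∀ i j, j ≠ i → j ≠ i + 1 → A i j = 0) :
    A.det = ∏ i, A i i - (-1) ^ n * ∏ i, A i (i + 1) := by
  set c : Perm (Fin (n + 2)) := (finRotate (n + 2))⁻¹
  have hvanish : ∀ σ ∉ ({1, c} : Finset (Perm (Fin (n + 2)))),
      Perm.sign σ • ∏ i, A (σ i) i = 0 := by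
    intro σ hσ
    simp only [Finset.mem_insert, Finset.mem_singleton, not_or] at hσ
    obtain ⟨i, hi⟩ : ∃ i, ¬(σ i = i ∨ σ i = i - 1) := by
      by_contra! h
      exact (Fin.perm_eq_one_or_eq_finRotate_inv σ h).elim hσ.1 hσ.2
    refine smul_eq_zero_of_right _ (Finset.prod_eq_zero (Finset.mem_univ i) (hA _ _ ?_ ?_))
    · exact fun h => hi (Or.inl h.symm)
    · exact fun h => hi (Or.inr (eq_sub_of_add_eq h.symm))
  have hcycle : ∏ i, A (c i) i = ∏ i, A i (i + 1) := by
    rw [← Equiv.prod_comp (finRotate (n + 2))]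
    simp [c, finRotate_apply]
  have hsign : (Perm.sign c : R) = -(-1) ^ n := by
    simp [c, sign_finRotate, pow_succ]
  rw [det_apply, ← Finset.sum_subset (Finset.subset_univ _) fun σ _ => hvanish σ,
    Finset.sum_pair (Fin.finRotate_inv_ne_one n).symm, Units.smul_def, Units.smul_def,
    zsmul_eq_mul, zsmul_eq_mul, hcycle, hsign]
  simp only [Perm.sign_one, Units.val_one, Int.cast_one, Perm.coe_one, id_eq, one_mul]
  ring

end Matrix

theorem det_heawoodMatrix_general (d : ℕ) (hd : 1 ≤ d) (k : Fin (d + 1) → ℤ) :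
    (heawoodMatrix d k).det = (∏ i, (k i + 1)) - ∏ i, k i := by
  obtain ⟨n, rfl⟩ : ∃ n, d = n + 1 := ⟨d - 1, by omega⟩
  have hsuper : ∀ i : Fin (n + 2), i + 1 ≠ i := fun i h =>
    Fin.sub_one_ne_self (i + 1) (by rw [add_sub_cancel_right, h])
  rw [Matrix.det_of_cyclic_bidiagonal _ fun i j h₁ h₂ => by simp [heawoodMatrix, h₁, h₂]]
  simp only [heawoodMatrix, Matrix.of_apply, if_true, hsuper, if_false]
  have hshift : ∏ i, k (i + 1) = ∏ i, k i :=
    Fintype.prod_equiv (Equiv.addRight 1) _ _ fun _ => rfl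
  rw [Finset.prod_neg, hshift, Finset.card_univ, Fintype.card_fin, ← mul_assoc, ← pow_add,
    Even.neg_one_pow ⟨n + 1, by ring⟩, one_mul]

theorem det_heawoodMatrix (d : ℕ) (hd : 1 ≤ d) (k : Fin (d + 1) → ℤ)
    (hk : ∀ i, 0 < k i) :
    (heawoodMatrix d k).det = (∏ i, (k i + 1)) - ∏ i, k i :=
  det_heawoodMatrix_general d hd k
end

section
/- Every integer vector (a_1,...,a_{d+1}) ∈ ℤ^{d+1} is congruent, modulo the subgroup of ℤ^{d+1} generated by the rows of M_k together with the all-ones vector (1,...,1), to a vector (c_1,...,c_{d+1}) satisfying 0 ≤ c_i ≤ k_i for all i and c_i = 0 for at least one i. -/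
/-! Chip firing. Put the weight `W i = ∏_{j ≠ i} (k j + 1)` on coordinate `i`; then row `i` of
`M_k` has weight `W (i + 1) > 0`, and subtracting row `i` from a nonnegative vector with
`a i > k i` keeps it nonnegative. So firing overfull coordinates strictly lowers the weight of a
nonnegative vector and must stop inside the box `0 ≤ c ≤ k`. Adding multiples of `(1, …, 1)`
first makes `a` nonnegative and finally creates a zero coordinate. -/

open Finset Matrix

section ChipFiring

variable {ι : Type*} [Fintype ι]

theorem Matrix.exists_mem_Icc_sub_mem_closure_range_of_nonneg (M : Matrix ι ι ℤ) (k : ι → ℤ)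
    (hdiag : ∀ i, M i i ≤ k i + 1) (hoff : ∀ i j, j ≠ i → M i j ≤ 0)
    (W : ι → ℤ) (hW : 0 ≤ W) (hMW : ∀ i, 0 < (M *ᵥ W) i) (a : ι → ℤ) (ha : 0 ≤ a) :
    ∃ c ∈ Set.Icc 0 k, a - c ∈ AddSubgroup.closure (Set.range M) := by
  induction hn : (a ⬝ᵥ W).toNat using Nat.strong_induction_on generalizing a with
  | _ n ih =>
  by_cases hbox : a ≤ k
  · exact ⟨a, ⟨ha, hbox⟩, by simp⟩
  obtain ⟨i, hi⟩ : ∃ i, k i < a i := by simpa [Pi.le_def] using hbox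
  have hfired : 0 ≤ a - M i := fun j => by
    rcases eq_or_ne j i with rfl | hj
    · simpa using (hdiag j).trans (by omega)
    · simpa using (hoff i j hj).trans (ha j)
  have hlt : ((a - M i) ⬝ᵥ W).toNat < n := by
    have hpos := dotProduct_nonneg_of_nonneg hfired hW
    rw [sub_dotProduct] at hpos ⊢
    have : 0 < M i ⬝ᵥ W := hMW i
    omega
  obtain ⟨c, hc, hmem⟩ := ih _ hlt (a - M i) hfired rfl
  refine ⟨c, hc, ?_⟩
  have := add_mem hmem (AddSubgroup.subset_closure ⟨i, rfl⟩)
  rwa [sub_right_comm, sub_add_cancel] at this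

end ChipFiring

section Heawood

variable {d : ℕ} {k : Fin (d + 1) → ℤ}

@[simp]
theorem heawoodMatrix_apply_self (i : Fin (d + 1)) : heawoodMatrix d k i i = k i + 1 := by
  simp [heawoodMatrix]

theorem heawoodMatrix_apply_nonpos (hk : ∀ i, 0 ≤ k i) {i j : Fin (d + 1)} (hj : j ≠ i) :
    heawoodMatrix d k i j ≤ 0 := by
  simp only [heawoodMatrix, of_apply, if_neg hj]
  split_ifs
  · simpa using hk _
  · rfl

def heawoodWeight (k : Fin (d + 1) → ℤ) (i : Fin (d + 1)) : ℤ :=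
  ∏ j ∈ univ.erase i, (k j + 1)

theorem heawoodWeight_pos (hk : ∀ i, 0 ≤ k i) (i : Fin (d + 1)) : 0 < heawoodWeight k i :=
  prod_pos fun j _ => by linarith [hk j]

theorem heawoodMatrix_mulVec_heawoodWeight_pos (hk : ∀ i, 0 ≤ k i) (i : Fin (d + 1)) :
    0 < (heawoodMatrix d k *ᵥ heawoodWeight k) i := by
  -- The bound is an equality unless `d = 0`, where `i + 1 = i`.
  have hlower : Pi.single i (k i + 1) - Pi.single (i + 1) (k (i + 1)) ≤ heawoodMatrix d k i :=
    fun j => by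
      simp only [heawoodMatrix, of_apply, Pi.sub_apply, Pi.single_apply]
      split_ifs <;> linarith [hk j, hk (i + 1)]
  have hprod (j : Fin (d + 1)) : (k j + 1) * heawoodWeight k j = ∏ l, (k l + 1) :=
    mul_prod_erase univ (fun l => k l + 1) (mem_univ j)
  calc 0 < heawoodWeight k (i + 1) := heawoodWeight_pos hk _
    _ = (k i + 1) * heawoodWeight k i - k (i + 1) * heawoodWeight k (i + 1) := by
      rw [hprod, ← hprod (i + 1)]
      ring
    _ = (Pi.single i (k i + 1) - Pi.single (i + 1) (k (i + 1))) ⬝ᵥ heawoodWeight k := by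
      rw [sub_dotProduct, single_dotProduct, single_dotProduct]
    _ ≤ heawoodMatrix d k i ⬝ᵥ heawoodWeight k :=
      dotProduct_le_dotProduct_of_nonneg_right hlower fun j => (heawoodWeight_pos hk j).le

theorem exists_mem_Icc_sub_mem_closure_heawoodMatrix (hk : ∀ i, 0 ≤ k i) (a : Fin (d + 1) → ℤ)
    (ha : 0 ≤ a) :
    ∃ c ∈ Set.Icc 0 k, a - c ∈ AddSubgroup.closure (Set.range (heawoodMatrix d k)) :=
  exists_mem_Icc_sub_mem_closure_range_of_nonneg _ k (fun i => (heawoodMatrix_apply_self i).le)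
    (fun _ _ => heawoodMatrix_apply_nonpos hk) _ (fun j => (heawoodWeight_pos hk j).le)
    (heawoodMatrix_mulVec_heawoodWeight_pos hk) a ha

end Heawood

theorem exists_fundamental_representative_general (d : ℕ)
    (k : Fin (d + 1) → ℤ) (hk : ∀ i, 0 < k i)
    (L : AddSubgroup (Fin (d + 1) → ℤ))
    (hL : L = AddSubgroup.closure
      (Set.range (fun i => heawoodMatrix d k i) ∪ {fun _ => (1 : ℤ)}))
    (a : Fin (d + 1) → ℤ) :
    ∃ c : Fin (d + 1) → ℤ,
      (∀ i, 0 ≤ c i ∧ c i ≤ k i) ∧ (∃ i, c i = 0) ∧ a - c ∈ L := by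
  have hrows : AddSubgroup.closure (Set.range (heawoodMatrix d k)) ≤ L :=
    hL ▸ AddSubgroup.closure_mono Set.subset_union_left
  have hone : (fun _ => (1 : ℤ)) ∈ L := hL ▸ AddSubgroup.subset_closure (Or.inr rfl)
  have hconst (t : ℤ) : (fun _ => t) ∈ L := by
    convert L.zsmul_mem hone t using 1
    ext
    simp
  obtain ⟨i₀, hi₀⟩ := Finite.exists_min a
  obtain ⟨c, ⟨hc0, hck⟩, hc⟩ := exists_mem_Icc_sub_mem_closure_heawoodMatrix
    (fun i => (hk i).le) (a - fun _ => a i₀) fun i => sub_nonneg.2 (hi₀ i)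
  obtain ⟨j₀, hj₀⟩ := Finite.exists_min c
  refine ⟨c - fun _ => c j₀, fun i => ⟨sub_nonneg.2 (hj₀ i), ?_⟩, ⟨j₀, sub_self _⟩, ?_⟩
  · have hcj₀ : 0 ≤ c j₀ := hc0 j₀
    have hci : c i ≤ k i := hck i
    show c i - c j₀ ≤ k i
    linarith
  · convert L.add_mem (hrows hc) (hconst (a i₀ + c j₀)) using 1
    funext i
    simp only [Pi.sub_apply, Pi.add_apply]
    ring

theorem exists_fundamental_representative (d : ℕ) (hd : 1 ≤ d)
    (k : Fin (d + 1) → ℤ) (hk : ∀ i, 0 < k i)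
    (L : AddSubgroup (Fin (d + 1) → ℤ))
    (hL : L = AddSubgroup.closure
      (Set.range (fun i => heawoodMatrix d k i) ∪ {fun _ => (1 : ℤ)}))
    (a : Fin (d + 1) → ℤ) :
    ∃ c : Fin (d + 1) → ℤ,
      (∀ i, 0 ≤ c i ∧ c i ≤ k i) ∧ (∃ i, c i = 0) ∧ a - c ∈ L :=
  exists_fundamental_representative_general d k hk L hL a
end

section
/- If s and t are two integer vectors in ℤ^{d+1}, each satisfying 0 ≤ s_i ≤ k_i, 0 ≤ t_i ≤ k_i for all i, with at least one coordinate of s equal to 0 and at least one coordinate of t equal to 0, and if t - s lies in the subgroup of ℤ^{d+1} generated by the rows of M_k and the all-ones vector, then s = t. -/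
/-! The all-ones vector is the sum of the rows of `M_k`, so `t - s = b ᵥ* M_k` for an integer
vector `b`, i.e. `t j - s j = b j + k j * (b j - b (j - 1))` with indices read cyclically.
If `b` were not constant, some maximum `b j` would follow a strictly smaller `b (j - 1)`,
making this `≥ b j + k j`; since `|t j - s j| ≤ k j`, the maximum of `b` is `≤ 0`, and
symmetrically its minimum is `≥ 0`, a contradiction. So `t - s` is a constant vector, and a
zero coordinate of `s` and one of `t` force the constant to be `0`. -/

open Matrix

open Fin.NatCast in
theorem Fin.forall_of_imp_sub_one {n : ℕ} {p : Fin (n + 1) → Prop}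
    (hp : ∀ j, p j → p (j - 1)) {j₀ : Fin (n + 1)} (h₀ : p j₀) (j : Fin (n + 1)) :
    p j := by
  have hiter : ∀ m : ℕ, p (j₀ - m) := by
    intro m
    induction m with
    | zero => simpa using h₀
    | succ m ih => simpa [sub_add_eq_sub_sub] using hp _ ih
  simpa using hiter (j₀ - j).val

theorem Fin.exists_argmax_sub_one_lt {n : ℕ} {b : Fin (n + 1) → ℤ}
    (hb : ∃ i j, b i ≠ b j) :
    ∃ j, (∀ i, b i ≤ b j) ∧ b (j - 1) < b j := by
  obtain ⟨j₀, hj₀⟩ := Finite.exists_max b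
  by_contra! hclosed
  obtain ⟨i, j, hij⟩ := hb
  have hconst : ∀ j, b j = b j₀ := Fin.forall_of_imp_sub_one
    (fun j hj => le_antisymm (hj₀ _) (hj ▸ hclosed j (hj ▸ hj₀))) rfl
  exact hij (by rw [hconst i, hconst j])

theorem Fin.eq_of_abs_add_mul_sub_le {n : ℕ} {k b : Fin (n + 1) → ℤ} (hk : ∀ j, 0 ≤ k j)
    (hb : ∀ j, |b j + k j * (b j - b (j - 1))| ≤ k j) (i j : Fin (n + 1)) : b i = b j := by
  by_contra hij
  obtain ⟨jM, hjM, hltM⟩ := Fin.exists_argmax_sub_one_lt ⟨i, j, hij⟩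
  obtain ⟨jm, hjm, hltm⟩ :=
    Fin.exists_argmax_sub_one_lt (b := -b) ⟨i, j, by simpa using hij⟩
  simp only [Pi.neg_apply, neg_le_neg_iff, neg_lt_neg_iff] at hjm hltm
  have hmax : b jM ≤ 0 := by
    have := (abs_le.mp (hb jM)).2
    nlinarith [hk jM]
  have hmin : 0 ≤ b jm := by
    have := (abs_le.mp (hb jm)).1
    nlinarith [hk jm]
  exact hij (by linarith [hjM i, hjM j, hjm i, hjm j])

theorem Fin.sub_one_ne_self_s5 {n : ℕ} (hn : 1 ≤ n) (j : Fin (n + 1)) : j - 1 ≠ j := by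
  simp [sub_eq_self, Fin.ext_iff, Nat.mod_eq_of_lt (show 1 < n + 1 by omega)]

theorem heawoodMatrix_apply {d : ℕ} (hd : 1 ≤ d) (k : Fin (d + 1) → ℤ) (i j : Fin (d + 1)) :
    heawoodMatrix d k i j = if i = j then k j + 1 else if i = j - 1 then -k j else 0 := by
  have hne := Fin.sub_one_ne_self_s5 hd j
  rw [heawoodMatrix, Matrix.of_apply]
  grind

theorem vecMul_heawoodMatrix_apply {d : ℕ} (hd : 1 ≤ d) (k b : Fin (d + 1) → ℤ)
    (j : Fin (d + 1)) :
    (b ᵥ* heawoodMatrix d k) j = b j + k j * (b j - b (j - 1)) := by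
  have hne := Fin.sub_one_ne_self_s5 hd j
  rw [vecMul, dotProduct, Fintype.sum_eq_add j (j - 1) hne.symm]
  · simp only [heawoodMatrix_apply hd, ↓reduceIte, hne, mul_neg]
    ring
  · intro i hi
    simp [heawoodMatrix_apply hd, hi]

theorem exists_vecMul_heawoodMatrix_eq {d : ℕ} (hd : 1 ≤ d) (k : Fin (d + 1) → ℤ)
    {x : Fin (d + 1) → ℤ}
    (hx : x ∈ AddSubgroup.closure (Set.range (fun i => heawoodMatrix d k i) ∪ {fun _ => 1})) :
    ∃ b, b ᵥ* heawoodMatrix d k = x := by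
  suffices h : AddSubgroup.closure (Set.range (fun i => heawoodMatrix d k i) ∪ {fun _ => 1}) ≤
      (LinearMap.range (heawoodMatrix d k).vecMulLinear).toAddSubgroup from h hx
  rw [AddSubgroup.closure_le]
  rintro _ (⟨i, rfl⟩ | rfl)
  · classical
    exact ⟨Pi.single i 1, Matrix.single_one_vecMul i _⟩
  · exact ⟨fun _ => 1, funext fun j => by simp [vecMul_heawoodMatrix_apply hd]⟩

theorem fundamental_representatives_unique (d : ℕ) (hd : 1 ≤ d)
    (k : Fin (d + 1) → ℤ) (hk : ∀ i, 0 < k i)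
    (L : AddSubgroup (Fin (d + 1) → ℤ))
    (hL : L = AddSubgroup.closure
      (Set.range (fun i => heawoodMatrix d k i) ∪ {fun _ => (1 : ℤ)}))
    (s t : Fin (d + 1) → ℤ)
    (hs : ∀ i, 0 ≤ s i ∧ s i ≤ k i) (hs0 : ∃ i, s i = 0)
    (ht : ∀ i, 0 ≤ t i ∧ t i ≤ k i) (ht0 : ∃ i, t i = 0)
    (hmem : t - s ∈ L) :
    s = t := by
  subst hL
  obtain ⟨b, hb⟩ := exists_vecMul_heawoodMatrix_eq hd k hmem
  have hdiff : ∀ j, t j - s j = b j + k j * (b j - b (j - 1)) := fun j => by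
    rw [← vecMul_heawoodMatrix_apply hd, hb, Pi.sub_apply]
  have hbound : ∀ j, |b j + k j * (b j - b (j - 1))| ≤ k j := fun j =>
    abs_le.mpr ⟨by linarith [hdiff j, hs j, ht j], by linarith [hdiff j, hs j, ht j]⟩
  have hb_const : ∀ j, b j = b 0 := fun j =>
    Fin.eq_of_abs_add_mul_sub_le (fun j => (hk j).le) hbound j 0
  have hconst : ∀ j, t j - s j = b 0 := fun j => by
    rw [hdiff, hb_const j, hb_const (j - 1)]
    ring
  obtain ⟨i₀, hi₀⟩ := hs0
  obtain ⟨i₁, hi₁⟩ := ht0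
  funext j
  linarith [hconst j, hconst i₀, hconst i₁, ht i₀, hs i₁]
end

section
/- The face of the permutahedron labeled by the ordered partition [B_2,...,B_k,B_1] is the translate of the face labeled [B_1,B_2,...,B_k] by the vector Σ_{b∈B_1} w_b, where w_b = (d+1)e_b − Σ_j e_j. Concretely: the set of permutation vectors x of [d+1] with {x_a : a ∈ B_i} = {b_{i-1}+1,...,b_i} for all i (where b_i = |B_1|+...+|B_i|), translated by Σ_{b∈B_1} w_b, equals the set of permutation vectors y of [d+1] with {y_a : a ∈ B_{i+1 mod k}} being the appropriate consecutive intervals for the rotated partition. -/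
/-!
On the face of `[B₁, …, B_k]` a vector takes the values `1, …, |B₁|` on `B₁` and larger values
elsewhere, so adding `∑_{b ∈ B₁} w_b` (which is `d + 1 - |B₁|` on `B₁` and `-|B₁|` off it) rotates
the value intervals cyclically: each block lands exactly on its interval for the rotated partition.
Since the block intervals tile `{1, …, d + 1}`, the permutation condition in a face follows from
the block conditions, so both faces are cut out by block conditions alone and the translation
matches them block by block.
-/

/-- The face of the permutahedral tiling labeled by an ordered set partition
`C` of `Fin (d+1)`: the set of permutation vectors `x` such that the image of
each block `C i` is the consecutive interval of values determined by the sizes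
of the preceding blocks. -/
def orderedPartitionFace (d m : ℕ) (C : Fin (m + 1) → Finset (Fin (d + 1))) :
    Set (Fin (d + 1) → ℤ) :=
  {x | (∃ σ : Equiv.Perm (Fin (d + 1)), ∀ a, x a = ((σ a : ℕ) : ℤ) + 1) ∧
    ∀ i, (C i).image x =
      Finset.Icc ((∑ j ∈ Finset.univ.filter (fun j => j < i), ((C j).card : ℤ)) + 1)
        ((∑ j ∈ Finset.univ.filter (fun j => j < i), ((C j).card : ℤ)) + (C i).card)}

open Finset Function

lemma exists_perm_of_injective_of_mem_Icc {n : ℕ} {x : Fin n → ℤ} (hx : Injective x)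
    (hrange : ∀ a, x a ∈ Set.Icc 1 (n : ℤ)) :
    ∃ σ : Equiv.Perm (Fin n), ∀ a, x a = ((σ a : ℕ) : ℤ) + 1 := by
  have hlt : ∀ a, (x a - 1).toNat < n := fun a => by
    obtain ⟨h1, h2⟩ := hrange a
    omega
  let f : Fin n → Fin n := fun a => ⟨(x a - 1).toNat, hlt a⟩
  have hval : ∀ a, x a = ((f a : ℕ) : ℤ) + 1 := fun a => by
    obtain ⟨h1, -⟩ := hrange a
    show x a = ((x a - 1).toNat : ℤ) + 1
    omega
  have hf : Injective f := fun a b hab => hx (by rw [hval a, hval b, hab])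
  exact ⟨Equiv.ofBijective f (Finite.injective_iff_bijective.mp hf), hval⟩

lemma Fin.add_one_eq_zero_iff {m : ℕ} {i : Fin (m + 1)} : i + 1 = 0 ↔ i = Fin.last m :=
  ⟨fun h => add_right_cancel (h.trans (Fin.last_add_one m).symm), fun h => h ▸ Fin.last_add_one m⟩

open Fin.NatCast in
lemma Fin.sum_Iio_eq_sum_range {M : Type*} [AddCommMonoid M] {m : ℕ} (f : Fin (m + 1) → M)
    (i : Fin (m + 1)) : ∑ j ∈ Iio i, f j = ∑ t ∈ range i, f t := by
  rw [← Nat.Iio_eq_range, ← Fin.map_valEmbedding_Iio, sum_map]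
  simp [Fin.cast_val_eq_self]

open Fin.NatCast in
lemma Fin.sum_Iio_comp_add_one_add {M : Type*} [AddCommMonoid M] {m : ℕ} (f : Fin (m + 1) → M)
    (i : Fin (m + 1)) : ∑ j ∈ Iio i, f (j + 1) + f 0 = ∑ j ∈ Iic i, f j := by
  rw [← sum_Iio_add_eq_sum_Iic, Fin.sum_Iio_eq_sum_range, Fin.sum_Iio_eq_sum_range]
  have := sum_range_succ' (fun t : ℕ => f t) i
  rw [sum_range_succ] at this
  simpa [Fin.cast_val_eq_self] using this.symm

lemma sum_card_eq_card_of_partition {ι α : Type*} [Fintype ι] [Fintype α] [DecidableEq α]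
    {C : ι → Finset α} (hdisj : Pairwise (Disjoint on C)) (hcover : ∀ a, ∃ i, a ∈ C i) :
    ∑ i, (C i).card = Fintype.card α := by
  rw [← card_biUnion (fun i _ j _ hij => hdisj hij), ← card_univ]
  congr
  exact eq_univ_of_forall fun a => mem_biUnion.mpr ((hcover a).imp fun i hi => ⟨mem_univ i, hi⟩)

lemma image_sub_eq_Icc_iff {α : Type*} {S : Finset α} {y v : α → ℤ} {t p q : ℤ}
    (hv : ∀ a ∈ S, v a = t) : S.image (y - v) = Icc p q ↔ S.image y = Icc (p + t) (q + t) := by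
  have hshift : S.image (y - v) = (S.image y).image (· + -t) := by
    rw [image_image]
    exact image_congr fun a ha => by simp [hv a ha, sub_eq_add_neg]
  rw [hshift, ← (image_injective (add_left_injective t)).eq_iff, image_image, image_add_right_Icc]
  simp

lemma sum_apply_eq_of_eq_ite {ι : Type*} [DecidableEq ι] {w : ι → ι → ℤ} {c : ℤ}
    (hw : ∀ b j, w b j = if j = b then c else -1) (S : Finset ι) (a : ι) :
    (∑ b ∈ S, w b) a = (if a ∈ S then c + 1 else 0) - S.card := by
  calc (∑ b ∈ S, w b) a = ∑ b ∈ S, ((if a = b then c + 1 else 0) - 1) := by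
        rw [Finset.sum_apply]
        exact sum_congr rfl fun b _ => by rw [hw]; split_ifs <;> ring
    _ = (if a ∈ S then c + 1 else 0) - S.card := by simp [sum_sub_distrib, sum_ite_eq]

section BlockInterval

variable {α : Type*} {m : ℕ} (C : Fin (m + 1) → Finset α)

def blockOffset (i : Fin (m + 1)) : ℤ := ∑ j ∈ Iio i, ((C j).card : ℤ)

noncomputable def blockInterval (i : Fin (m + 1)) : Finset ℤ :=
  Icc (blockOffset C i + 1) (blockOffset C i + (C i).card)

lemma card_blockInterval (i : Fin (m + 1)) : (blockInterval C i).card = (C i).card := by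
  simp [blockInterval]

lemma blockOffset_add_card_le_of_lt {i j : Fin (m + 1)} (hij : i < j) :
    blockOffset C i + (C i).card ≤ blockOffset C j := by
  rw [blockOffset, sum_Iio_add_eq_sum_Iic]
  exact sum_le_sum_of_subset_of_nonneg (fun k hk => mem_Iio.mpr ((mem_Iic.mp hk).trans_lt hij))
    fun _ _ _ => by positivity

lemma lt_of_mem_blockInterval {i j : Fin (m + 1)} (hij : i < j) {u v : ℤ}
    (hu : u ∈ blockInterval C i) (hv : v ∈ blockInterval C j) : u < v := by
  have := blockOffset_add_card_le_of_lt C hij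
  simp only [blockInterval, mem_Icc] at hu hv
  omega

lemma blockInterval_subset_Icc (i : Fin (m + 1)) :
    blockInterval C i ⊆ Icc 1 (∑ j, ((C j).card : ℤ)) := by
  have hnonneg : 0 ≤ blockOffset C i := sum_nonneg fun _ _ => by positivity
  have hle : blockOffset C i + (C i).card ≤ ∑ j, ((C j).card : ℤ) := by
    rw [blockOffset, sum_Iio_add_eq_sum_Iic]
    exact sum_le_univ_sum_of_nonneg fun _ => by positivity
  intro u hu
  simp only [blockInterval, mem_Icc] at hu ⊢
  omega

/-- At `i = Fin.last m` the index `i + 1` wraps around to `0`, which is what the `if` corrects. -/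
lemma blockOffset_rotate (i : Fin (m + 1)) :
    blockOffset (fun j => C (j + 1)) i + (C 0).card =
      blockOffset C (i + 1) + if i = Fin.last m then ∑ j, ((C j).card : ℤ) else 0 := by
  rw [blockOffset, Fin.sum_Iio_comp_add_one_add (fun j => ((C j).card : ℤ))]
  split_ifs with hi
  · subst hi
    rw [Fin.last_add_one, ← Fin.top_eq_last, Iic_top]
    simp [blockOffset, ← bot_eq_zero]
  · rw [blockOffset, Fin.Iio_add_one_eq_Iic, add_zero]
    have := Fin.val_lt_last hi
    omega

end BlockInterval

lemma mem_orderedPartitionFace {d m : ℕ} {C : Fin (m + 1) → Finset (Fin (d + 1))}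
    {x : Fin (d + 1) → ℤ} : x ∈ orderedPartitionFace d m C ↔
      (∃ σ : Equiv.Perm (Fin (d + 1)), ∀ a, x a = ((σ a : ℕ) : ℤ) + 1) ∧
        ∀ i, (C i).image x = blockInterval C i := by
  simp only [orderedPartitionFace, blockInterval, blockOffset, filter_gt_eq_Iio, Set.mem_ofPred_eq]

theorem orderedPartitionFace_eq {d m : ℕ} {C : Fin (m + 1) → Finset (Fin (d + 1))}
    (hdisj : Pairwise (Disjoint on C)) (hcover : ∀ a, ∃ i, a ∈ C i) :
    orderedPartitionFace d m C = {x | ∀ i, (C i).image x = blockInterval C i} := by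
  ext x
  refine ⟨fun hx => (mem_orderedPartitionFace.mp hx).2,
    fun hx => mem_orderedPartitionFace.mpr ⟨?_, hx⟩⟩
  have hmem : ∀ {a i}, a ∈ C i → x a ∈ blockInterval C i := fun ha => hx _ ▸ mem_image_of_mem x ha
  apply exists_perm_of_injective_of_mem_Icc
  · intro a b hab
    obtain ⟨i, hi⟩ := hcover a
    obtain ⟨j, hj⟩ := hcover b
    rcases lt_trichotomy i j with hij | rfl | hji
    · exact absurd hab (lt_of_mem_blockInterval C hij (hmem hi) (hmem hj)).ne
    · exact card_image_iff.mp (by rw [hx i, card_blockInterval]) hi hj hab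
    · exact absurd hab (lt_of_mem_blockInterval C hji (hmem hj) (hmem hi)).ne'
  · intro a
    obtain ⟨i, hi⟩ := hcover a
    have := blockInterval_subset_Icc C i (hmem hi)
    rw [← Nat.cast_sum, sum_card_eq_card_of_partition hdisj hcover] at this
    simpa using this

lemma image_eq_blockInterval_rotate_iff {α : Type*} {m : ℕ} {C : Fin (m + 1) → Finset α}
    {y v : α → ℤ} {i : Fin (m + 1)}
    (hv : ∀ a ∈ C (i + 1),
      v a = (if i = Fin.last m then ∑ j, ((C j).card : ℤ) else 0) - (C 0).card) :
    (C (i + 1)).image y = blockInterval (fun j => C (j + 1)) i ↔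
      (C (i + 1)).image (y - v) = blockInterval C (i + 1) := by
  have hoffset := blockOffset_rotate C i
  simp only [blockInterval]
  rw [image_sub_eq_Icc_iff hv]
  convert Iff.rfl using 3 <;> linarith

theorem face_rotation_general (d m : ℕ)
    (B : Fin (m + 1) → Finset (Fin (d + 1)))
    (hdisj : ∀ i j, i ≠ j → Disjoint (B i) (B j))
    (hcover : ∀ a, ∃ i, a ∈ B i)
    (w : Fin (d + 1) → Fin (d + 1) → ℤ)
    (hw : ∀ b j, w b j = if j = b then (d : ℤ) else -1) :
    orderedPartitionFace d m (fun i => B (i + 1)) =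
      (fun x => x + ∑ b ∈ B 0, w b) '' orderedPartitionFace d m B := by
  have hcard : ∑ j, ((B j).card : ℤ) = d + 1 := by
    rw [← Nat.cast_sum, sum_card_eq_card_of_partition (fun i j => hdisj i j) hcover]
    simp
  have hv : ∀ i, ∀ a ∈ B (i + 1), (∑ b ∈ B 0, w b) a =
      (if i = Fin.last m then ∑ j, ((B j).card : ℤ) else 0) - (B 0).card := by
    intro i a ha
    have hmem0 : a ∈ B 0 ↔ i = Fin.last m := by
      rw [← Fin.add_one_eq_zero_iff]
      exact ⟨fun h0 => by_contra fun h => disjoint_left.mp (hdisj _ _ h) ha h0, fun h => h ▸ ha⟩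
    simp only [sum_apply_eq_of_eq_ite hw, hmem0, hcard]
  ext y
  rw [orderedPartitionFace_eq (fun i j hij => hdisj _ _ (by simpa using hij))
      (fun a => (hcover a).imp' (· - 1) fun i hi => by simpa using hi),
    orderedPartitionFace_eq (fun i j => hdisj i j) hcover]
  simp only [Set.mem_ofPred_eq, Set.mem_image, ← eq_sub_iff_add_eq, exists_eq_right]
  exact (Equiv.addRight 1).forall_congr fun i => image_eq_blockInterval_rotate_iff (hv i)

/-- First Rotation Lemma: the face of the rotated ordered partition
`[B₂,…,B_k,B₁]` is the translate of the face of `[B₁,…,B_k]` by `∑_{b ∈ B₁} w_b`. -/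
theorem face_rotation (d m : ℕ) (hd : 1 ≤ d)
    (B : Fin (m + 1) → Finset (Fin (d + 1)))
    (hdisj : ∀ i j, i ≠ j → Disjoint (B i) (B j))
    (hne : ∀ i, (B i).Nonempty)
    (hcover : ∀ a, ∃ i, a ∈ B i)
    (w : Fin (d + 1) → Fin (d + 1) → ℤ)
    (hw : ∀ b j, w b j = if j = b then (d : ℤ) else -1) :
    orderedPartitionFace d m (fun i => B (i + 1)) =
      (fun x => x + ∑ b ∈ B 0, w b) '' orderedPartitionFace d m B :=
  face_rotation_general d m B hdisj hcover w hw
end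

section
/- If x and y are permutation vectors of (1,...,d+1) and y - x ∈ Λ_d (the ℤ-span of the vectors w_i), then y is obtained from x by a 'rotation': there exists m with 0 ≤ m ≤ d+1 such that y_a = x_a - m (mod d+1, taken in {1,...,d+1}) for all a; equivalently, y_a = x_a + d + 1 - m when x_a ≤ m and y_a = x_a - m when x_a > m, and y - x = Σ_{a : x_a ≤ m} w_a. -/
theorem perm_vectors_lattice_diff_is_rotation (d : ℕ) (hd : 1 ≤ d)
    (x y : Fin (d + 1) → ℤ)
    (hx : ∃ σ : Equiv.Perm (Fin (d + 1)), ∀ a, x a = ((σ a : ℕ) : ℤ) + 1)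
    (hy : ∃ σ : Equiv.Perm (Fin (d + 1)), ∀ a, y a = ((σ a : ℕ) : ℤ) + 1)
    (w : Fin (d + 1) → Fin (d + 1) → ℤ)
    (hw : ∀ b j, w b j = if j = b then (d : ℤ) else -1)
    (hmem : y - x ∈ Submodule.span ℤ (Set.range w)) :
    ∃ m : ℕ, m ≤ d + 1 ∧
      (∀ a, (x a ≤ (m : ℤ) → y a = x a + (d + 1) - m) ∧
            ((m : ℤ) < x a → y a = x a - m)) ∧
      y - x = ∑ a ∈ Finset.univ.filter (fun a => x a ≤ (m : ℤ)), w a := by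
  obtain ⟨σ, hσ⟩ := hx
  obtain ⟨τ, hτ⟩ := hy
  -- bounds on x and y
  have hxb : ∀ a, 1 ≤ x a ∧ x a ≤ (d : ℤ) + 1 := by
    intro a
    have h := (σ a).isLt
    have h0 : (0:ℤ) ≤ ((σ a : ℕ) : ℤ) := Int.ofNat_nonneg _
    constructor
    · rw [hσ a]; linarith
    · rw [hσ a]
      have : ((σ a : ℕ) : ℤ) ≤ d := by exact_mod_cast Nat.lt_succ_iff.mp h
      linarith
  have hyb : ∀ a, 1 ≤ y a ∧ y a ≤ (d : ℤ) + 1 := by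
    intro a
    have h := (τ a).isLt
    have h0 : (0:ℤ) ≤ ((τ a : ℕ) : ℤ) := Int.ofNat_nonneg _
    constructor
    · rw [hτ a]; linarith
    · rw [hτ a]
      have : ((τ a : ℕ) : ℤ) ≤ d := by exact_mod_cast Nat.lt_succ_iff.mp h
      linarith
  -- all coordinates of y - x are congruent mod d+1
  have key : ∀ i j, ((d : ℤ) + 1) ∣ (y - x) i - (y - x) j := by
    refine Submodule.span_induction (p := fun z _ => ∀ i j, ((d : ℤ) + 1) ∣ z i - z j)
      ?_ ?_ ?_ ?_ hmem
    case refine_1 =>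
      intro z hz
      obtain ⟨b, rfl⟩ := hz
      intro i j
      rw [hw, hw]
      by_cases h1 : i = b <;> by_cases h2 : j = b
      · simp [h1, h2]
      · rw [if_pos h1, if_neg h2]; exact ⟨1, by ring⟩
      · rw [if_neg h1, if_pos h2]; exact ⟨-1, by ring⟩
      · rw [if_neg h1, if_neg h2]; simp
    case refine_2 => intro i j; simp
    case refine_3 =>
      intro z1 z2 h1 h2 p1 p2 i j
      have := dvd_add (p1 i j) (p2 i j)
      simpa [sub_add_sub_comm] using this
    case refine_4 =>
      intro c z hz p i j
      have := (p i j).mul_left c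
      simpa [mul_sub] using this
  -- define m
  set r : ℤ := (x 0 - y 0) % ((d : ℤ) + 1) with hr
  have hdpos : (0:ℤ) < (d:ℤ) + 1 := by positivity
  have hr0 : 0 ≤ r := Int.emod_nonneg _ (by positivity)
  have hrd : r < (d : ℤ) + 1 := by
    have := Int.emod_lt_of_pos (x 0 - y 0) hdpos
    simpa [hr] using this
  refine ⟨r.toNat, ?_, ?_, ?_⟩
  · omega
  all_goals
    have hmr : ((r.toNat : ℕ) : ℤ) = r := Int.toNat_of_nonneg hr0
  -- the pointwise congruence
  · have hcase : ∀ a, (x a ≤ r → y a = x a + ((d:ℤ) + 1) - r) ∧ (r < x a → y a = x a - r) := by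
      intro a
      have hdvd : ((d : ℤ) + 1) ∣ (x a - y a) - r := by
        have h1 := key a 0
        have h2 : ((d:ℤ)+1) ∣ (x 0 - y 0) - r := Int.dvd_self_sub_of_emod_eq rfl
        have : (x a - y a) - r = -((y - x) a - (y - x) 0) + ((x 0 - y 0) - r) := by
          simp [Pi.sub_apply]; ring
        rw [this]
        exact dvd_add (dvd_neg.mpr h1) h2
      obtain ⟨k, hk⟩ := hdvd
      have hxa := hxb a
      have hya := hyb a
      have hk0 : k = 0 ∨ k = -1 := by
        have h1 : k ≤ 0 := by nlinarith
        have h2 : -1 ≤ k := by nlinarith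
        omega
      rcases hk0 with rfl | rfl
      · simp at hk
        constructor
        · intro hle; linarith
        · intro hlt; linarith
      · constructor
        · intro hle; linarith
        · intro hlt; linarith
    intro a
    rw [hmr]
    exact hcase a
  -- the sum formula
  · have hcase : ∀ a, (x a ≤ r → y a = x a + ((d:ℤ) + 1) - r) ∧ (r < x a → y a = x a - r) := by
      intro a
      have hdvd : ((d : ℤ) + 1) ∣ (x a - y a) - r := by
        have h1 := key a 0
        have h2 : ((d:ℤ)+1) ∣ (x 0 - y 0) - r := Int.dvd_self_sub_of_emod_eq rfl
        have : (x a - y a) - r = -((y - x) a - (y - x) 0) + ((x 0 - y 0) - r) := by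
          simp [Pi.sub_apply]; ring
        rw [this]
        exact dvd_add (dvd_neg.mpr h1) h2
      obtain ⟨k, hk⟩ := hdvd
      have hxa := hxb a
      have hya := hyb a
      have hk0 : k = 0 ∨ k = -1 := by
        have h1 : k ≤ 0 := by nlinarith
        have h2 : -1 ≤ k := by nlinarith
        omega
      rcases hk0 with rfl | rfl
      · simp at hk
        constructor
        · intro hle; linarith
        · intro hlt; linarith
      · constructor
        · intro hle; linarith
        · intro hlt; linarith
    -- cardinality of the filter set is r
    set S : Finset (Fin (d+1)) := Finset.univ.filter (fun a => x a ≤ ((r.toNat : ℕ) : ℤ)) with hS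
    have hcard : (S.card : ℤ) = r := by
      have hfin : r.toNat < d + 1 := by omega
      have hSeq : S = Finset.univ.filter (fun a => σ a < (⟨r.toNat, hfin⟩ : Fin (d+1))) := by
        ext a
        simp only [hS, Finset.mem_filter, Finset.mem_univ, true_and, Fin.lt_def]
        rw [hσ a, hmr]
        constructor
        · intro h; omega
        · intro h
          have : ((σ a : ℕ) : ℤ) < r := by exact_mod_cast (by exact_mod_cast h : ((σ a : ℕ):ℤ) < (r.toNat : ℤ)).trans_le (le_of_eq hmr)
          linarith
      rw [hSeq]
      have : Finset.univ.filter (fun a => σ a < (⟨r.toNat, hfin⟩ : Fin (d+1)))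
          = (Finset.Iio (⟨r.toNat, hfin⟩ : Fin (d+1))).map σ.symm.toEmbedding := by
        ext a
        simp only [Finset.mem_filter, Finset.mem_univ, true_and, Finset.mem_map,
          Finset.mem_Iio, Equiv.coe_toEmbedding]
        constructor
        · intro h; exact ⟨σ a, h, by simp⟩
        · rintro ⟨b, hb, rfl⟩; simpa using hb
      rw [this, Finset.card_map, Fin.card_Iio]
      simpa using hmr
    funext j
    rw [Finset.sum_apply]
    have hterm : ∀ a ∈ S, w a j = (if a = j then ((d:ℤ) + 1) else 0) - 1 := by
      intro a _
      rw [hw]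
      rcases eq_or_ne a j with rfl | h
      · simp
      · simp [h, Ne.symm h]
    rw [Finset.sum_congr rfl hterm, Finset.sum_sub_distrib, Finset.sum_ite_eq',
      Finset.sum_const, nsmul_eq_mul, mul_one]
    have hj := hcase j
    by_cases hjm : j ∈ S
    · have hle : x j ≤ r := by
        have := (Finset.mem_filter.mp hjm).2
        rwa [hmr] at this
      have h1 := hj.1 hle
      simp only [Pi.sub_apply, if_pos hjm]
      linarith [hcard]
    · have hlt : r < x j := by
        by_contra hc
        push_neg at hc
        exact hjm (Finset.mem_filter.mpr ⟨Finset.mem_univ _, by rwa [hmr]⟩)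
      have h1 := hj.2 hlt
      simp only [Pi.sub_apply, if_neg hjm]
      linarith [hcard]
end
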